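/- arXiv:2003.00296 — 3 statements merged into one kernel-verified Lean document; each statement's English description precedes it below -/
import Mathlib

section
/- Fairness of the coin-flipping game for uniformly random flips: under the infinite product measure μ = ⨂_{n∈ℕ} Bernoulli(1/2) on ℕ → Bool, the event that player A wins the game, namely {ω : ℕ → Bool | ∃ n, ω n = ω (n+1), and at the least such index n one has ω n = true}, has μ-measure exactly 1/2. -/
open MeasureTheory

def IsFairBernoulliProduct (μ : Measure (ℕ → Bool)) : Prop :=
  ∀ (s : Finset ℕ) (f : ℕ → Bool),
    μ {ω | ∀ i ∈ s, ω i = f i} = (1 / 2 : ENNReal) ^ s.card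

def AWins (ω : ℕ → Bool) : Prop :=
  ∃ h : ∃ n : ℕ, ω n = ω (n + 1), ω (Nat.find h) = true

/-!
Player A wins at flip `n` exactly when the first `n + 2` flips form the alternating word
ending in `true, true`, an event of probability `2⁻¹ ^ (n + 2)`. These events are disjoint,
so A wins with probability `∑ₙ 2⁻¹ ^ (n + 2) = 1 / 2`.
-/

open Finset Function

theorem measurableSet_forall_mem_eq {ι β : Type*} [MeasurableSpace β]
    [MeasurableSingletonClass β] (s : Finset ι) (f : ι → β) :
    MeasurableSet {ω : ι → β | ∀ i ∈ s, ω i = f i} := by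
  simp only [Set.ofPred_forall]
  exact s.measurableSet_biInter fun i _ ↦
    (measurableSet_singleton (f i)).preimage (measurable_pi_apply i)

theorem ENNReal.tsum_inv_two_pow_add_two : ∑' n : ℕ, (2⁻¹ : ENNReal) ^ (n + 2) = 2⁻¹ := by
  simp only [pow_add, ENNReal.tsum_mul_right, ENNReal.tsum_geometric_two]
  rw [sq, ← mul_assoc, ENNReal.mul_inv_cancel two_ne_zero ENNReal.ofNat_ne_top, one_mul]

def AWinsAt (ω : ℕ → Bool) (n : ℕ) : Prop :=
  ω n = ω (n + 1) ∧ ω n = true ∧ ∀ k < n, ω k ≠ ω (k + 1)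

theorem setOf_aWins_eq_iUnion : {ω | AWins ω} = ⋃ n, {ω | AWinsAt ω n} := by
  ext ω
  simp only [Set.mem_iUnion]
  constructor
  · rintro ⟨h, hA⟩
    exact ⟨Nat.find h, Nat.find_spec h, hA, fun k hk ↦ Nat.find_min h hk⟩
  · rintro ⟨n, htie, hA, hmin⟩
    have h : ∃ n, ω n = ω (n + 1) := ⟨n, htie⟩
    exact ⟨h, by rwa [(Nat.find_eq_iff h).2 ⟨htie, hmin⟩]⟩

theorem AWinsAt.eq {ω : ℕ → Bool} {m n : ℕ} (hm : AWinsAt ω m) (hn : AWinsAt ω n) : m = n := by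
  by_contra hne
  rcases Nat.lt_or_gt_of_ne hne with h | h
  · exact hn.2.2 m h hm.1
  · exact hm.2.2 n h hn.1

/-- The alternating word of length `n + 2` ending in `true, true`; at `i = n + 1` the truncated
subtraction `n - i = 0` gives the second `true`. -/
def aWinsAtWord (n i : ℕ) : Bool := !Nat.bodd (n - i)

theorem aWinsAt_iff {ω : ℕ → Bool} {n : ℕ} :
    AWinsAt ω n ↔ ∀ i ∈ range (n + 2), ω i = aWinsAtWord n i := by
  simp only [mem_range, aWinsAtWord]
  constructor
  · rintro ⟨htie, hA, hmin⟩
    have hprefix : ∀ j ≤ n, ω (n - j) = !Nat.bodd j := by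
      intro j
      induction j with
      | zero => simpa using hA
      | succ j ih =>
        intro hj
        have hne := hmin (n - (j + 1)) (by omega)
        rw [show n - (j + 1) + 1 = n - j by omega, ih (by omega)] at hne
        simpa using Bool.eq_not_of_ne hne
    intro i hi
    rcases Nat.lt_succ_iff_lt_or_eq.1 hi with hi | rfl
    · simpa [Nat.sub_sub_self (Nat.lt_succ_iff.1 hi)] using hprefix (n - i) (by omega)
    · simp [← htie, hA]
  · intro h
    refine ⟨by simp [h n, h (n + 1)], by simp [h n], fun k hk ↦ ?_⟩
    rw [h k (by omega), h (k + 1) (by omega), show n - k = n - (k + 1) + 1 by omega]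
    simp

/-- Fairness of the coin-flipping game: under the infinite product of fair
Bernoulli measures, player A wins with probability exactly `1/2`. -/
theorem fair_game_is_fair
    (μ : Measure (ℕ → Bool)) (hμ : IsFairBernoulliProduct μ) :
    μ {ω : ℕ → Bool | AWins ω} = 1 / 2 := by
  have hcyl (n : ℕ) :
      {ω | AWinsAt ω n} = {ω | ∀ i ∈ range (n + 2), ω i = aWinsAtWord n i} :=
    Set.ext fun _ ↦ aWinsAt_iff
  have hdisj : Pairwise (Disjoint on fun n ↦ {ω | AWinsAt ω n}) :=
    fun _ _ hmn ↦ Set.disjoint_left.2 fun _ hm hn ↦ hmn (hm.eq hn)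
  rw [setOf_aWins_eq_iUnion,
    measure_iUnion hdisj fun n ↦ hcyl n ▸ measurableSet_forall_mem_eq _ _]
  simp only [hcyl, hμ _ _, card_range, one_div, ENNReal.tsum_inv_two_pow_add_two]
end

section
/- A per-flip advantage yields a game advantage: for every real r with 1/2 ≤ r ≤ 1, under the infinite product measure μ_r = ⨂_{n∈ℕ} Bernoulli(r) on ℕ → Bool, the event that player A wins the game, namely {ω : ℕ → Bool | ∃ n, ω n = ω (n+1), and at the least such index n one has ω n = true}, has μ_r-measure at least 1/2. -/
/-!
A wins whenever the flips alternate up to some index `n` and then show two heads at `n, n + 1`.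
These events are disjoint cylinders of probability `p ^ 2 (p q) ^ k` (for `n = 2k`) and
`p ^ 2 q (p q) ^ k` (for `n = 2k + 1`), where `p = r` and `q = 1 - r`, so A wins with probability
at least `p ^ 2 (1 + q) / (1 - p q)`, and `2 p ^ 2 (1 + q) - (1 - p q) = (2r - 1)(1 + r - r ^ 2)`.
-/

open MeasureTheory

/-- `μ` is the infinite product measure `⨂_{n ∈ ℕ} Bernoulli(r)` on `ℕ → Bool`:
it is characterized by its values on cylinder sets, where each fixed coordinate
contributes a factor `r` (if fixed to `true`) or `1 - r` (if fixed to `false`). -/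
def IsBernoulliProduct (r : ℝ) (μ : Measure (ℕ → Bool)) : Prop :=
  ∀ (s : Finset ℕ) (f : ℕ → Bool),
    μ {ω | ∀ i ∈ s, ω i = f i} =
      ∏ i ∈ s, (if f i then ENNReal.ofReal r else ENNReal.ofReal (1 - r))

open Finset
open scoped ENNReal

section WinningRuns

/-- The alternating run of length `n + 2` ending with two heads at `n, n + 1`; truncated
subtraction makes position `n + 1` a head as well. -/
def winPattern (n i : ℕ) : Bool := decide ((n - i) % 2 = 0)

def winCylinder (n : ℕ) : Set (ℕ → Bool) :=
  {ω | ∀ i ∈ range (n + 2), ω i = winPattern n i}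

variable {n : ℕ} {ω : ℕ → Bool}

lemma measurableSet_winCylinder (n : ℕ) : MeasurableSet (winCylinder n) := by
  unfold winCylinder
  measurability

lemma isLeast_of_mem_winCylinder (hω : ω ∈ winCylinder n) :
    IsLeast {k | ω k = ω (k + 1)} n := by
  have hpat : ∀ i ≤ n + 1, ω i = winPattern n i := fun i hi => hω i (mem_range.2 (by omega))
  refine ⟨?_, fun k hk => ?_⟩
  · simp [hpat n (by omega), hpat (n + 1) le_rfl, winPattern]
  · by_contra! hkn
    have hrep : winPattern n k = winPattern n (k + 1) := by
      rw [← hpat k (by omega), ← hpat (k + 1) (by omega)]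
      exact hk
    simp only [winPattern, decide_eq_decide] at hrep
    omega

lemma pairwise_disjoint_winCylinder : Pairwise (Function.onFun Disjoint winCylinder) :=
  fun _ _ hmn => Set.disjoint_left.2 fun _ hm hn =>
    hmn ((isLeast_of_mem_winCylinder hm).unique (isLeast_of_mem_winCylinder hn))

lemma winCylinder_subset_aWins (n : ℕ) : winCylinder n ⊆ {ω | AWins ω} := by
  intro ω hω
  have hleast := isLeast_of_mem_winCylinder hω
  refine ⟨⟨n, hleast.1⟩, ?_⟩
  rw [(Nat.find_eq_iff _).2 ⟨hleast.1, fun k hk hrep => not_le.2 hk (hleast.2 hrep)⟩,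
    hω n (mem_range.2 (by omega))]
  simp [winPattern]

lemma prod_range_winPattern_add_two {M : Type*} [CommMonoid M] (p q : M) (n : ℕ) :
    ∏ i ∈ range (n + 4), (if winPattern (n + 2) i then p else q) =
      p * q * ∏ i ∈ range (n + 2), (if winPattern n i then p else q) := by
  have hshift : ∀ i, winPattern (n + 2) (i + 2) = winPattern n i := by
    intro i
    simp only [winPattern, decide_eq_decide]
    omega
  have hhead : (if winPattern (n + 2) 1 then p else q) * (if winPattern (n + 2) 0 then p else q) =
      p * q := by
    rcases Nat.mod_two_eq_zero_or_one n with h | h <;> simp [winPattern, Nat.add_mod, h, mul_comm]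
  rw [prod_range_succ', prod_range_succ', mul_assoc, hhead, mul_comm]
  simp only [hshift]

end WinningRuns

lemma tsum_eq_of_add_two_eq_mul {a : ℕ → ℝ≥0∞} {c : ℝ≥0∞} (h : ∀ n, a (n + 2) = c * a n) :
    ∑' n, a n = (a 0 + a 1) * (1 - c)⁻¹ := by
  have hgeom : ∀ j k, a (2 * k + j) = a j * c ^ k := by
    intro j k
    induction k with
    | zero => simp
    | succ k ih => rw [show 2 * (k + 1) + j = 2 * k + j + 2 by ring, h, ih, pow_succ]; ring
  have heven : ∀ k, a (2 * k) = a 0 * c ^ k := hgeom 0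
  rw [← tsum_even_add_odd ENNReal.summable ENNReal.summable]
  simp only [heven, hgeom 1, ENNReal.tsum_mul_left, ENNReal.tsum_geometric]
  ring

lemma half_le_winProbability {r : ℝ} (hr0 : 1 / 2 ≤ r) (hr1 : r ≤ 1) :
    1 / 2 ≤ (ENNReal.ofReal r ^ 2 + ENNReal.ofReal (1 - r) * ENNReal.ofReal r ^ 2) *
      (1 - ENNReal.ofReal r * ENNReal.ofReal (1 - r))⁻¹ := by
  have hp : 0 ≤ r := by linarith
  have hq : 0 ≤ 1 - r := by linarith
  have hden : 0 < 1 - r * (1 - r) := by nlinarith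
  have hreal : 1 / 2 ≤ (r ^ 2 + (1 - r) * r ^ 2) / (1 - r * (1 - r)) := by
    rw [le_div_iff₀ hden]
    have hfactor : 0 ≤ (2 * r - 1) * (1 + r - r ^ 2) := mul_nonneg (by linarith) (by nlinarith)
    nlinarith
  calc (1 / 2 : ℝ≥0∞) = ENNReal.ofReal (1 / 2) := by
        rw [ENNReal.ofReal_div_of_pos two_pos]
        simp
    _ ≤ ENNReal.ofReal ((r ^ 2 + (1 - r) * r ^ 2) / (1 - r * (1 - r))) :=
      ENNReal.ofReal_le_ofReal hreal
    _ = _ := by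
      rw [ENNReal.ofReal_div_of_pos hden, div_eq_mul_inv, ENNReal.ofReal_sub _ (mul_nonneg hp hq),
        ENNReal.ofReal_one, ENNReal.ofReal_add (by positivity) (mul_nonneg hq (by positivity)),
        ENNReal.ofReal_mul hq, ENNReal.ofReal_mul hp, ENNReal.ofReal_pow hp]

/-- A per-flip advantage yields a game advantage: if player A wins each flip
independently with probability `r ≥ 1/2`, then A wins the whole game with
probability at least `1/2`. -/
theorem per_flip_advantage_game_advantage
    (r : ℝ) (hr0 : 1 / 2 ≤ r) (hr1 : r ≤ 1)
    (μ : Measure (ℕ → Bool)) (hμ : IsBernoulliProduct r μ) :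
    1 / 2 ≤ μ {ω : ℕ → Bool | AWins ω} := by
  set p := ENNReal.ofReal r
  set q := ENNReal.ofReal (1 - r)
  have hcyl : ∀ n, μ (winCylinder n) = ∏ i ∈ range (n + 2), (if winPattern n i then p else q) :=
    fun n => hμ (range (n + 2)) (winPattern n)
  have hstep : ∀ n, μ (winCylinder (n + 2)) = p * q * μ (winCylinder n) := fun n => by
    rw [hcyl, hcyl, prod_range_winPattern_add_two]
  have hcyl0 : μ (winCylinder 0) = p ^ 2 := by simp [hcyl, winPattern, pow_two]
  have hcyl1 : μ (winCylinder 1) = q * p ^ 2 := by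
    simp [hcyl, prod_range_succ, winPattern, pow_two, mul_assoc]
  calc 1 / 2 ≤ (μ (winCylinder 0) + μ (winCylinder 1)) * (1 - p * q)⁻¹ := by
        rw [hcyl0, hcyl1]
        exact half_le_winProbability hr0 hr1
    _ = ∑' n, μ (winCylinder n) :=
        (tsum_eq_of_add_two_eq_mul (a := fun n => μ (winCylinder n)) hstep).symm
    _ = μ (⋃ n, winCylinder n) :=
        (measure_iUnion pairwise_disjoint_winCylinder measurableSet_winCylinder).symm
    _ ≤ μ {ω | AWins ω} := measure_mono (Set.iUnion_subset winCylinder_subset_aWins)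
end

section
/- Continuation value of the last-flip winner: under the infinite product measure μ = ⨂_{n∈ℕ} Bernoulli(1/2) on ℕ → Bool, define the shifted sequence ω̂ by ω̂ 0 = true and ω̂ (n+1) = ω n, modeling the situation where player A has just won the previous flip. Then the event that A wins the game from this position, namely {ω : ℕ → Bool | ∃ n, ω̂ n = ω̂ (n+1), and at the least such index n one has ω̂ n = true}, has μ-measure exactly 2/3, and the complementary event that B wins (i.e., at the least such index n one has ω̂ n = false) has μ-measure exactly 1/3. Consequently, with a pot of 6 bitcoins, the fair split after a failed renegotiation gives 6·(2/3) = 4 bitcoins to the winner of the last flip and 6·(1/3) = 2 bitcoins to the other player. -/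
open MeasureTheory

/-- Player B wins the game on outcome `ω`: there is some index `n` with
`ω n = ω (n+1)`, and at the least such index `n` one has `ω n = false`. -/
def BWins (ω : ℕ → Bool) : Prop :=
  ∃ h : ∃ n : ℕ, ω n = ω (n + 1), ω (Nat.find h) = false

/-- The shifted sequence `ω̂` modeling the situation where player A has just won
the previous flip: `ω̂ 0 = true` and `ω̂ (n+1) = ω n`. -/
def shiftA (ω : ℕ → Bool) : ℕ → Bool
  | 0 => true
  | n + 1 => ω n

/-!
Relabel so that `ω̂ = shiftA ω` is the sequence of flip winners, starting with A's last
win. Until the game ends the winners alternate, so `ω̂` agrees with `true, false, true, …` up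
to the first index `n` with `ω̂ n = ω̂ (n + 1)`, and `ω̂ (n + 1) = ω̂ n`. Hence "the game ends
at `n`" is a cylinder event fixing the `n + 1` coordinates `ω 0, …, ω n`, of probability
`2⁻¹ ^ (n + 1)`, and A wins exactly when `n` is even. Summing over even and odd `n` gives
`2/3` and `1/3`.
-/
open scoped ENNReal

namespace CoinFlipGame

theorem decide_even_add_one (j : ℕ) : decide (Even (j + 1)) = !decide (Even j) := by
  simp only [Nat.even_add_one, decide_not]

theorem eq_decide_even_of_forall_lt_ne {ω : ℕ → Bool} {n : ℕ} (h0 : ω 0 = true)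
    (halt : ∀ m < n, ω m ≠ ω (m + 1)) : ∀ j ≤ n, ω j = decide (Even j)
  | 0, _ => by simpa using h0
  | j + 1, hj => by
    have ih := eq_decide_even_of_forall_lt_ne h0 halt j (by omega)
    rw [decide_even_add_one, Bool.eq_not_iff, ← ih]
    exact (halt j (by omega)).symm

theorem exists_find_eq_iff_eq_decide_even {ω : ℕ → Bool} (h0 : ω 0 = true) (n : ℕ) :
    (∃ h : ∃ m, ω m = ω (m + 1), Nat.find h = n) ↔
      ∀ j ≤ n + 1, ω j = decide (Even (min j n)) := by
  constructor
  · rintro ⟨h, rfl⟩ j hj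
    have halt : ∀ j ≤ Nat.find h, ω j = decide (Even j) :=
      eq_decide_even_of_forall_lt_ne h0 fun m hm => Nat.find_min h hm
    rcases Nat.lt_or_ge j (Nat.find h + 1) with hj' | hj'
    · rw [min_eq_left (by omega), halt j (by omega)]
    · rw [show j = Nat.find h + 1 by omega, min_eq_right (by omega), ← Nat.find_spec h,
        halt _ le_rfl]
  · intro hω
    have hrep : ω n = ω (n + 1) := by
      rw [hω n (by omega), hω (n + 1) le_rfl, min_self, min_eq_right (Nat.le_succ n)]
    refine ⟨⟨n, hrep⟩, (Nat.find_eq_iff _).2 ⟨hrep, fun m hm => ?_⟩⟩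
    rw [hω m (by omega), hω (m + 1) (by omega), min_eq_left (by omega),
      min_eq_left (by omega), decide_even_add_one]
    exact (Bool.not_ne_self _).symm

/-- The event that, after A's last win, the game ends at flip `n`. -/
def endsAt (n : ℕ) : Set (ℕ → Bool) :=
  {ω | ∀ i ∈ Finset.range (n + 1), ω i = decide (Even (min (i + 1) n))}

theorem mem_endsAt_iff {ω : ℕ → Bool} {n : ℕ} :
    ω ∈ endsAt n ↔ ∃ h : ∃ m, shiftA ω m = shiftA ω (m + 1), Nat.find h = n := by
  rw [exists_find_eq_iff_eq_decide_even rfl]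
  refine ⟨fun hω j hj => ?_, fun hω i hi => hω (i + 1) (by simpa using hi)⟩
  cases j with
  | zero => simp [shiftA]
  | succ i => exact hω i (by simpa using hj)

theorem shiftA_find_eq_decide_even (ω : ℕ → Bool)
    (h : ∃ m, shiftA ω m = shiftA ω (m + 1)) :
    shiftA ω (Nat.find h) = decide (Even (Nat.find h)) := by
  have hω := (exists_find_eq_iff_eq_decide_even (ω := shiftA ω) rfl (Nat.find h)).1 ⟨h, rfl⟩
  simpa using hω (Nat.find h) (by omega)

theorem setOf_AWins_shiftA : {ω | AWins (shiftA ω)} = ⋃ k, endsAt (2 * k) := by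
  ext ω
  simp only [Set.mem_ofPred_eq, Set.mem_iUnion, mem_endsAt_iff, AWins,
    shiftA_find_eq_decide_even, decide_eq_true_eq, even_iff_exists_two_mul]
  rw [exists_comm]

theorem setOf_BWins_shiftA : {ω | BWins (shiftA ω)} = ⋃ k, endsAt (2 * k + 1) := by
  ext ω
  simp only [Set.mem_ofPred_eq, Set.mem_iUnion, mem_endsAt_iff, BWins,
    shiftA_find_eq_decide_even, decide_eq_false_iff_not, Nat.not_even_iff_odd, Odd]
  rw [exists_comm]

theorem pairwise_disjoint_endsAt : Pairwise (Function.onFun Disjoint endsAt) := by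
  intro m n hmn
  refine Set.disjoint_left.2 fun ω hm hn => hmn ?_
  obtain ⟨h, rfl⟩ := mem_endsAt_iff.1 hm
  obtain ⟨h', rfl⟩ := mem_endsAt_iff.1 hn
  rfl

theorem measurableSet_endsAt (n : ℕ) : MeasurableSet (endsAt n) := by
  simp only [endsAt, Set.ofPred_forall]
  exact .biInter (Set.to_countable _) fun i _ => measurableSet_eq_fun (measurable_pi_apply i)
    measurable_const

theorem measure_iUnion_endsAt {μ : Measure (ℕ → Bool)} (hμ : IsFairBernoulliProduct μ)
    {g : ℕ → ℕ} (hg : g.Injective) :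
    μ (⋃ k, endsAt (g k)) = ∑' k, (1 / 2) ^ (g k + 1) := by
  rw [measure_iUnion (pairwise_disjoint_endsAt.comp_of_injective hg)
    fun k => measurableSet_endsAt _]
  refine tsum_congr fun k => ?_
  rw [endsAt, hμ, Finset.card_range]

theorem tsum_half_pow_two_mul_add (j : ℕ) :
    ∑' k : ℕ, (1 / 2 : ℝ≥0∞) ^ (2 * k + j) = 4 / 3 * (1 / 2) ^ j := by
  have hsq : (1 / 2 : ℝ≥0∞) ^ 2 = 1 / 4 := by
    rw [one_div, one_div, ← ENNReal.inv_pow]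
    norm_num
  have hquarter : (1 - 1 / 4 : ℝ≥0∞) = 3 / 4 :=
    ENNReal.sub_eq_of_eq_add_rev (by norm_num) <| by
      rw [ENNReal.div_add_div_same, show (1 + 3 : ℝ≥0∞) = 4 by norm_num,
        ENNReal.div_self (by norm_num) (by norm_num)]
  simp_rw [pow_add, pow_mul, ENNReal.tsum_mul_right]
  rw [ENNReal.tsum_geometric, hsq, hquarter, ENNReal.inv_div (by simp) (by simp)]

end CoinFlipGame

open CoinFlipGame in
/-- Continuation value of the last-flip winner: if player A has just won a flip,
then A wins the game with probability `2/3` and B with probability `1/3`;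
consequently, with a pot of 6 bitcoins, the fair split gives `6·(2/3) = 4`
bitcoins to the winner of the last flip and `6·(1/3) = 2` to the other player. -/
theorem continuation_value_last_flip_winner
    (μ : Measure (ℕ → Bool)) (hμ : IsFairBernoulliProduct μ) :
    μ {ω : ℕ → Bool | AWins (shiftA ω)} = 2 / 3 ∧
    μ {ω : ℕ → Bool | BWins (shiftA ω)} = 1 / 3 ∧
    (6 : ℝ) * (2 / 3) = 4 ∧ (6 : ℝ) * (1 / 3) = 2 := by
  have hA : μ {ω | AWins (shiftA ω)} = 4 / 3 * (1 / 2) ^ 1 := by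
    rw [setOf_AWins_shiftA, measure_iUnion_endsAt hμ fun _ _ h => by simpa using h,
      ← tsum_half_pow_two_mul_add]
  have hB : μ {ω | BWins (shiftA ω)} = 4 / 3 * (1 / 2) ^ 2 := by
    rw [setOf_BWins_shiftA, measure_iUnion_endsAt hμ fun _ _ h => by simpa using h,
      ← tsum_half_pow_two_mul_add]
  refine ⟨?_, ?_, by norm_num, by norm_num⟩
  · rw [hA, ← ENNReal.toReal_eq_toReal_iff' (by finiteness) (by finiteness)]
    norm_num [ENNReal.toReal_div]
  · rw [hB, ← ENNReal.toReal_eq_toReal_iff' (by finiteness) (by finiteness)]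
    norm_num [ENNReal.toReal_div]
end
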